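/- arXiv:2104.13529 — 2 statements merged into one kernel-verified Lean document; each statement's English description precedes it below -/
import Mathlib

section
/- Let U be a unitary operator on H satisfying the SSQW conditions. Then there exists, for each x ∈ ℤ, an orthonormal basis {η₁ˣ, η₂ˣ} of H_x such that U H_x ⊆ ℂη₁^{x−1} ⊕ H_x ⊕ ℂη₂^{x+1} for every x ∈ ℤ. -/
noncomputable section

/-- `H = ⊕_{x∈ℤ} H_x`, the ℓ² direct sum with each `H_x` a copy of `ℂ²`. -/
abbrev H : Type := lp (fun _ : ℤ × Fin 2 => ℂ) 2

/-- The canonical orthonormal basis vector `eᵢˣ` of `H_x` viewed in `H`. -/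
def e (x : ℤ) (i : Fin 2) : H := lp.single 2 (x, i) 1

/-- The subspace `H_x` of `H`. -/
def Hx (x : ℤ) : Submodule ℂ H := Submodule.span ℂ {e x 0, e x 1}

/-- The rank-one operator `|u⟩⟨v| : w ↦ ⟨v, w⟩ u`. -/
def ketbra (u v : H) : H →L[ℂ] H := ((innerSL ℂ) v).smulRight u

/-- The orthogonal projection of `H` onto `H_x`. -/
def P (x : ℤ) : H →L[ℂ] H := ketbra (e x 0) (e x 0) + ketbra (e x 1) (e x 1)

/-- A unitary (linear isometric equivalence) viewed as a continuous linear map. -/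
def clm (U : H ≃ₗᵢ[ℂ] H) : H →L[ℂ] H := U.toLinearIsometry.toContinuousLinearMap

/-- `{u, v}` is an orthonormal basis of the two dimensional space `H_x`. -/
def ONBx (x : ℤ) (u v : H) : Prop :=
  u ∈ Hx x ∧ v ∈ Hx x ∧ ‖u‖ = 1 ∧ ‖v‖ = 1 ∧ (inner ℂ u v : ℂ) = 0

/-- The SSQW conditions: `U H_x ⊆ H_{x-1} ⊕ H_x ⊕ H_{x+1}` and
`rank(P_{x±1} U P_x) ≤ 1` for all `x`. -/
def SSQW (U : H ≃ₗᵢ[ℂ] H) : Prop :=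
  (∀ x : ℤ, ∀ ψ ∈ Hx x, U ψ ∈ Hx (x - 1) ⊔ Hx x ⊔ Hx (x + 1)) ∧
  (∀ x : ℤ, LinearMap.rank (((P (x + 1)).comp ((clm U).comp (P x))).toLinearMap) ≤ 1) ∧
  (∀ x : ℤ, LinearMap.rank (((P (x - 1)).comp ((clm U).comp (P x))).toLinearMap) ≤ 1)

/-!
By the rank conditions, the range of `P_{y} U P_{y-1}` lies on a line `ℂ a_y` and the range of
`P_{y} U P_{y+1}` on a line `ℂ b_y`, both inside `H_y`. These two lines are orthogonal: for
`ψ ∈ H_{y-1}` and `φ ∈ H_{y+1}`, the vectors `Uψ ∈ H_{y-2} ⊕ H_{y-1} ⊕ H_y` and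
`Uφ ∈ H_y ⊕ H_{y+1} ⊕ H_{y+2}` overlap only in `H_y`, so
`⟨P_y Uψ, P_y Uφ⟩ = ⟨Uψ, Uφ⟩ = ⟨ψ, φ⟩ = 0`. Since `H_y` is two-dimensional, it has an
orthonormal basis `{η₁ʸ, η₂ʸ}` with `b_y ∈ ℂη₁ʸ` and `a_y ∈ ℂη₂ʸ`; then `U H_x` lies in
`ℂη₁^{x-1} ⊕ H_x ⊕ ℂη₂^{x+1}`.
-/

open Module Submodule
open scoped InnerProductSpace

namespace Submodule

variable {𝕜 E : Type*} [RCLike 𝕜] [NormedAddCommGroup E] [InnerProductSpace 𝕜 E]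

lemma exists_norm_eq_one_inner_eq_zero (K : Submodule 𝕜 E) [FiniteDimensional 𝕜 K]
    (hK : 2 ≤ finrank 𝕜 K) (w : E) : ∃ v ∈ K, ‖v‖ = 1 ∧ ⟪w, v⟫_𝕜 = 0 := by
  have hker : LinearMap.ker ((innerₛₗ 𝕜 w).comp K.subtype) ≠ ⊥ :=
    LinearMap.ker_ne_bot_of_finrank_lt (by rw [finrank_self]; omega)
  obtain ⟨z, hz, hz0⟩ := Submodule.ne_bot_iff _ |>.1 hker
  have hz0' : (z : E) ≠ 0 := by simpa using hz0
  refine ⟨(‖(z : E)‖⁻¹ : 𝕜) • (z : E), K.smul_mem _ z.2, norm_smul_inv_norm hz0', ?_⟩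
  rw [inner_smul_right, show ⟪w, (z : E)⟫_𝕜 = 0 from hz, mul_zero]

lemma exists_norm_eq_one_inner_eq_zero_mem_span {K : Submodule 𝕜 E} [FiniteDimensional 𝕜 K]
    (hK : 2 ≤ finrank 𝕜 K) {w a : E} (ha : a ∈ K) (hwa : ⟪w, a⟫_𝕜 = 0) :
    ∃ v ∈ K, ‖v‖ = 1 ∧ ⟪w, v⟫_𝕜 = 0 ∧ a ∈ 𝕜 ∙ v := by
  by_cases ha0 : a = 0
  · obtain ⟨v, hv, hv1, hwv⟩ := K.exists_norm_eq_one_inner_eq_zero hK w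
    exact ⟨v, hv, hv1, hwv, ha0 ▸ zero_mem _⟩
  refine ⟨(‖a‖⁻¹ : 𝕜) • a, K.smul_mem _ ha, norm_smul_inv_norm ha0, ?_, ?_⟩
  · rw [inner_smul_right, hwa, mul_zero]
  · refine mem_span_singleton.2 ⟨‖a‖, ?_⟩
    rw [smul_smul, mul_inv_cancel₀ (by simpa using ha0), one_smul]

lemma exists_orthonormal_pair_mem_span {K : Submodule 𝕜 E} [FiniteDimensional 𝕜 K]
    (hK : 2 ≤ finrank 𝕜 K) {a b : E} (ha : a ∈ K) (hb : b ∈ K) (hab : ⟪a, b⟫_𝕜 = 0) :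
    ∃ u v, (u ∈ K ∧ v ∈ K ∧ ‖u‖ = 1 ∧ ‖v‖ = 1 ∧ ⟪u, v⟫_𝕜 = 0) ∧ b ∈ 𝕜 ∙ u ∧ a ∈ 𝕜 ∙ v := by
  obtain ⟨u, hu, hu1, hau, hbu⟩ := exists_norm_eq_one_inner_eq_zero_mem_span hK hb hab
  obtain ⟨v, hv, hv1, huv, hav⟩ :=
    exists_norm_eq_one_inner_eq_zero_mem_span hK ha (inner_eq_zero_symm.1 hau)
  exact ⟨u, v, ⟨hu, hv, hu1, hv1, huv⟩, hbu, hav⟩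

lemma inner_eq_inner_starProjection_of_mem_sup {A K B : Submodule 𝕜 E}
    [K.HasOrthogonalProjection] (hAK : A ⟂ K) (hAB : A ⟂ B) (hKB : K ⟂ B) {v w : E}
    (hv : v ∈ A ⊔ K) (hw : w ∈ K ⊔ B) :
    ⟪v, w⟫_𝕜 = ⟪K.starProjection v, K.starProjection w⟫_𝕜 := by
  obtain ⟨a, ha, k, hk, rfl⟩ := mem_sup.1 hv
  obtain ⟨k', hk', b, hb, rfl⟩ := mem_sup.1 hw
  have hPa : K.starProjection a = 0 := starProjection_apply_eq_zero_iff _ |>.2 (hAK ha)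
  have hPb : K.starProjection b = 0 := starProjection_apply_eq_zero_iff _ |>.2 (hKB.symm hb)
  rw [map_add, map_add, hPa, hPb, starProjection_eq_self_iff.2 hk,
    starProjection_eq_self_iff.2 hk', zero_add, add_zero, inner_add_left, inner_add_right,
    inner_add_right, hAK.inner_eq ha hk', hAB.inner_eq ha hb, hKB.inner_eq hk hb]
  simp

lemma eq_starProjection_add_add_of_mem_sup {A K B : Submodule 𝕜 E}
    [A.HasOrthogonalProjection] [K.HasOrthogonalProjection] [B.HasOrthogonalProjection]
    (hAK : A ⟂ K) (hAB : A ⟂ B) (hKB : K ⟂ B) {w : E} (hw : w ∈ A ⊔ K ⊔ B) :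
    w = A.starProjection w + K.starProjection w + B.starProjection w := by
  obtain ⟨_, hak, b, hb, rfl⟩ := mem_sup.1 hw
  obtain ⟨a, ha, k, hk, rfl⟩ := mem_sup.1 hak
  simp only [map_add, starProjection_eq_self_iff.2, starProjection_apply_eq_zero_iff _ |>.2,
    ha, hk, hb, hAK ha, hAB ha, hKB hk, hAK.symm hk, hAB.symm hb, hKB.symm hb]
  abel

end Submodule

lemma inner_e (x y : ℤ) (i j : Fin 2) :
    ⟪e x i, e y j⟫_ℂ = if (x, i) = (y, j) then 1 else 0 := by
  rw [e, e, lp.inner_single_left]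
  split_ifs with h
  · simp [h]
  · simp [h]

lemma orthonormal_e (x : ℤ) : Orthonormal ℂ (e x) :=
  orthonormal_iff_ite.2 fun i j => by simp [inner_e]

lemma Hx_eq_span_range (x : ℤ) : Hx x = span ℂ (Set.range (e x)) := by
  rw [Hx]
  congr 1
  ext v
  simp [Fin.exists_fin_two, eq_comm]

instance (x : ℤ) : FiniteDimensional ℂ (Hx x) :=
  Module.Finite.span_of_finite ℂ (Set.toFinite _)

lemma finrank_Hx (x : ℤ) : finrank ℂ (Hx x) = 2 := by
  rw [Hx_eq_span_range, finrank_span_eq_card (orthonormal_e x).linearIndependent,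
    Fintype.card_fin]

lemma Hx_isOrtho {x y : ℤ} (h : x ≠ y) : Hx x ⟂ Hx y := by
  simp [Hx, inner_e, h]

lemma P_apply (y : ℤ) (ψ : H) : P y ψ = ⟪e y 0, ψ⟫_ℂ • e y 0 + ⟪e y 1, ψ⟫_ℂ • e y 1 := by
  simp [P, ketbra]

lemma P_eq_starProjection (y : ℤ) : P y = (Hx y).starProjection := by
  refine ContinuousLinearMap.ext fun ψ =>
    ((Hx y).eq_starProjection_of_mem_of_inner_eq_zero ?_ fun w hw => ?_).symm
  · rw [P_apply]
    exact add_mem (smul_mem _ _ (subset_span (by simp))) (smul_mem _ _ (subset_span (by simp)))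
  · have h : span ℂ {ψ - P y ψ} ⟂ Hx y := by
      rw [Hx, isOrtho_span]
      simp [P_apply, inner_sub_left, inner_add_left, inner_smul_left, inner_e, (orthonormal_e y).1]
    exact h.inner_eq (mem_span_singleton_self _) hw

def block (U : H ≃ₗᵢ[ℂ] H) (y x : ℤ) : H →L[ℂ] H := (P y).comp ((clm U).comp (P x))

lemma block_apply (U : H ≃ₗᵢ[ℂ] H) (y x : ℤ) (ψ : H) :
    block U y x ψ = (Hx y).starProjection (U ((Hx x).starProjection ψ)) := by
  simp [block, clm, P_eq_starProjection]

lemma block_apply_of_mem (U : H ≃ₗᵢ[ℂ] H) (y : ℤ) {x : ℤ} {ψ : H} (hψ : ψ ∈ Hx x) :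
    block U y x ψ = (Hx y).starProjection (U ψ) := by
  rw [block_apply, starProjection_eq_self_iff.2 hψ]

lemma range_block_le (U : H ≃ₗᵢ[ℂ] H) (y x : ℤ) :
    LinearMap.range (block U y x).toLinearMap ≤ Hx y := by
  rintro _ ⟨ψ, rfl⟩
  simp [block_apply]

lemma inner_eq_zero_of_mem_range_block {U : H ≃ₗᵢ[ℂ] H}
    (hloc : ∀ x : ℤ, ∀ ψ ∈ Hx x, U ψ ∈ Hx (x - 1) ⊔ Hx x ⊔ Hx (x + 1)) {y : ℤ} {a b : H}
    (ha : a ∈ LinearMap.range (block U y (y - 1)).toLinearMap)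
    (hb : b ∈ LinearMap.range (block U y (y + 1)).toLinearMap) : ⟪a, b⟫_ℂ = 0 := by
  obtain ⟨ψ, rfl⟩ := ha
  obtain ⟨φ, rfl⟩ := hb
  set ψ' := (Hx (y - 1)).starProjection ψ
  set φ' := (Hx (y + 1)).starProjection φ
  have hψ' : ψ' ∈ Hx (y - 1) := starProjection_apply_mem _ _
  have hφ' : φ' ∈ Hx (y + 1) := starProjection_apply_mem _ _
  have hUψ : U ψ' ∈ (Hx (y - 1 - 1) ⊔ Hx (y - 1)) ⊔ Hx y := by
    simpa using hloc (y - 1) ψ' hψ'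
  have hUφ : U φ' ∈ Hx y ⊔ (Hx (y + 1) ⊔ Hx (y + 1 + 1)) := by
    simpa [sup_assoc] using hloc (y + 1) φ' hφ'
  calc ⟪block U y (y - 1) ψ, block U y (y + 1) φ⟫_ℂ
      = ⟪(Hx y).starProjection (U ψ'), (Hx y).starProjection (U φ')⟫_ℂ := by
        simp only [block_apply, ψ', φ']
    _ = ⟪U ψ', U φ'⟫_ℂ := by
        refine (inner_eq_inner_starProjection_of_mem_sup ?_ ?_ ?_ hUψ hUφ).symm <;>
          simp only [isOrtho_sup_left, isOrtho_sup_right] <;>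
          repeat' first | exact Hx_isOrtho (by omega) | constructor
    _ = ⟪ψ', φ'⟫_ℂ := U.inner_map_map ψ' φ'
    _ = 0 := (Hx_isOrtho (by omega)).inner_eq hψ' hφ'

lemma eq_block_add_block_add_block {U : H ≃ₗᵢ[ℂ] H}
    (hloc : ∀ x : ℤ, ∀ ψ ∈ Hx x, U ψ ∈ Hx (x - 1) ⊔ Hx x ⊔ Hx (x + 1)) {x : ℤ} {ψ : H}
    (hψ : ψ ∈ Hx x) : U ψ = block U (x - 1) x ψ + block U x x ψ + block U (x + 1) x ψ := by
  simp only [block_apply_of_mem _ _ hψ]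
  exact eq_starProjection_add_add_of_mem_sup (Hx_isOrtho (by omega)) (Hx_isOrtho (by omega))
    (Hx_isOrtho (by omega)) (hloc x ψ hψ)

namespace SSQW

variable {U : H ≃ₗᵢ[ℂ] H}

lemma exists_range_block_sub_one_le_span (hU : SSQW U) (y : ℤ) :
    ∃ a ∈ LinearMap.range (block U y (y - 1)).toLinearMap,
      LinearMap.range (block U y (y - 1)).toLinearMap ≤ ℂ ∙ a := by
  have h := hU.2.1 (y - 1)
  rw [sub_add_cancel] at h
  exact (rank_submodule_le_one_iff _).1 h

lemma exists_range_block_add_one_le_span (hU : SSQW U) (y : ℤ) :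
    ∃ b ∈ LinearMap.range (block U y (y + 1)).toLinearMap,
      LinearMap.range (block U y (y + 1)).toLinearMap ≤ ℂ ∙ b := by
  have h := hU.2.2 (y + 1)
  rw [add_sub_cancel_right] at h
  exact (rank_submodule_le_one_iff _).1 h

end SSQW

/-- For a unitary `U` satisfying the SSQW conditions, there
exists for each `x` an orthonormal basis `{η₁ˣ, η₂ˣ}` of `H_x` such that
`U H_x ⊆ ℂη₁^{x−1} ⊕ H_x ⊕ ℂη₂^{x+1}` for every `x`. -/
theorem exists_eta_bases (U : H ≃ₗᵢ[ℂ] H) (hU : SSQW U) :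
    ∃ η₁ η₂ : ℤ → H,
      (∀ x : ℤ, ONBx x (η₁ x) (η₂ x)) ∧
      (∀ x : ℤ, ∀ ψ ∈ Hx x,
        U ψ ∈ Submodule.span ℂ {η₁ (x - 1)} ⊔ Hx x ⊔ Submodule.span ℂ {η₂ (x + 1)}) := by
  choose a ha using hU.exists_range_block_sub_one_le_span
  choose b hb using hU.exists_range_block_add_one_le_span
  choose η₁ η₂ hη hbη aη using fun y => exists_orthonormal_pair_mem_span (finrank_Hx y).ge
    (range_block_le U y _ (ha y).1) (range_block_le U y _ (hb y).1)
    (inner_eq_zero_of_mem_range_block hU.1 (ha y).1 (hb y).1)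
  refine ⟨η₁, η₂, hη, fun x ψ hψ => ?_⟩
  have h₁ : LinearMap.range (block U (x - 1) x).toLinearMap ≤ ℂ ∙ η₁ (x - 1) := by
    have h := (hb (x - 1)).2.trans ((span_singleton_le_iff_mem _ _).2 (hbη (x - 1)))
    rwa [sub_add_cancel] at h
  have h₂ : LinearMap.range (block U (x + 1) x).toLinearMap ≤ ℂ ∙ η₂ (x + 1) := by
    have h := (ha (x + 1)).2.trans ((span_singleton_le_iff_mem _ _).2 (aη (x + 1)))
    rwa [add_sub_cancel_right] at h
  rw [eq_block_add_block_add_block hU.1 hψ]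
  exact add_mem (add_mem (mem_sup_left (mem_sup_left (h₁ ⟨ψ, rfl⟩)))
    (mem_sup_left (mem_sup_right (range_block_le U x x ⟨ψ, rfl⟩)))) (mem_sup_right (h₂ ⟨ψ, rfl⟩))
end
end

section
/- Let U be a unitary on H satisfying the SSQW conditions, and let {η₁ˣ, η₂ˣ}_{x∈ℤ} be orthonormal bases of the H_x with U H_x ⊆ ℂη₁^{x−1} ⊕ H_x ⊕ ℂη₂^{x+1} for all x ∈ ℤ. If rank(P_x U P_{x+1}) = 0 for some x ∈ ℤ, then there exists a unit vector ζ₁ ∈ H_x such that U ζ₁ = η₁ˣ. Similarly, if rank(P_x U P_{x−1}) = 0 for some x ∈ ℤ, then there exists a unit vector ζ₂ ∈ H_x such that U ζ₂ = η₂ˣ. -/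
noncomputable section

/-!
The only candidate is `ζ = U⁻¹ η`, where `η` is `η₁ˣ` (resp. `η₂ˣ`); it lies in `H_x` as soon as
`η ⊥ U H_y` for every `y ≠ x`. For `y = x + 1` (resp. `x - 1`) this is the rank-zero hypothesis.
For every other `y`, `U H_y` lies in `ℂη₁^{y-1} ⊕ H_y ⊕ ℂη₂^{y+1}`, and each summand is either
supported away from site `x` or is the vector of the basis at `x` orthogonal to `η`.
-/

lemma e_mem_Hx (x : ℤ) (i : Fin 2) : e x i ∈ Hx x := by
  fin_cases i <;> exact Submodule.subset_span (by simp)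

lemma inner_e_left (x : ℤ) (i : Fin 2) (f : H) : (inner ℂ (e x i) f : ℂ) = f (x, i) := by
  simp [e, lp.inner_single_left]

lemma inner_e_e (x y : ℤ) (i j : Fin 2) :
    (inner ℂ (e x i) (e y j) : ℂ) = if x = y ∧ i = j then 1 else 0 := by
  rw [inner_e_left, e, lp.single_apply, Pi.single_apply]
  simp [Prod.ext_iff]

lemma norm_e (x : ℤ) (i : Fin 2) : ‖e x i‖ = 1 := by
  simp [e, lp.norm_single]

lemma inner_eq_zero_of_mem_Hx {x y : ℤ} (h : x ≠ y) {u v : H} (hu : u ∈ Hx x) (hv : v ∈ Hx y) :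
    (inner ℂ u v : ℂ) = 0 := by
  obtain ⟨a, b, rfl⟩ := Submodule.mem_span_pair.mp hu
  obtain ⟨c, d, rfl⟩ := Submodule.mem_span_pair.mp hv
  simp [inner_e_e, h]

lemma mem_Hx_of_inner_e_eq_zero {x : ℤ} {ζ : H}
    (h : ∀ y ≠ x, ∀ i : Fin 2, (inner ℂ (e y i) ζ : ℂ) = 0) : ζ ∈ Hx x := by
  suffices ζ = ζ (x, 0) • e x 0 + ζ (x, 1) • e x 1 from
    this ▸ Submodule.add_mem _ (Submodule.smul_mem _ _ (e_mem_Hx x 0))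
      (Submodule.smul_mem _ _ (e_mem_Hx x 1))
  refine lp.ext (funext fun ⟨y, i⟩ => ?_)
  simp only [lp.coeFn_add, lp.coeFn_smul, Pi.add_apply, Pi.smul_apply, e, lp.single_apply,
    Pi.single_apply, Prod.ext_iff, smul_eq_mul]
  by_cases hy : y = x
  · subst hy
    fin_cases i <;> simp
  · simp [hy, ← inner_e_left, h y hy i]

lemma inner_e_P (x : ℤ) (j : Fin 2) (w : H) :
    (inner ℂ (e x j) (P x w) : ℂ) = inner ℂ (e x j) w := by
  fin_cases j <;> simp [P, ketbra, inner_e_e, norm_e]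

lemma P_e (x : ℤ) (i : Fin 2) : P x (e x i) = e x i := by
  fin_cases i <;> simp [P, ketbra, inner_e_e, norm_e]

lemma inner_apply_e_eq_zero_of_rank_eq_zero {U : H ≃ₗᵢ[ℂ] H} {x z : ℤ}
    (h : LinearMap.rank (((P x).comp ((clm U).comp (P z))).toLinearMap) = 0)
    (i : Fin 2) {η : H} (hη : η ∈ Hx x) : (inner ℂ (U (e z i)) η : ℂ) = 0 := by
  have hP : P x (U (e z i)) = 0 := by
    have := LinearMap.range_eq_bot.mp (Submodule.rank_eq_zero.mp h)
    simpa [clm, P_e] using LinearMap.congr_fun this (e z i)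
  have he (j : Fin 2) : (inner ℂ (e x j) (U (e z i)) : ℂ) = 0 := by
    rw [← inner_e_P, hP, inner_zero_right]
  obtain ⟨a, b, rfl⟩ := Submodule.mem_span_pair.mp hη
  rw [inner_eq_zero_symm]
  simp [inner_add_left, inner_smul_left, he]

lemma inner_apply_eq_zero_of_orthogonal {U : H ≃ₗᵢ[ℂ] H} {a b : H} {y : ℤ}
    (hrange : ∀ ψ ∈ Hx y, U ψ ∈ Submodule.span ℂ {a} ⊔ Hx y ⊔ Submodule.span ℂ {b})
    {η : H} (ha : (inner ℂ a η : ℂ) = 0) (hy : ∀ v ∈ Hx y, (inner ℂ v η : ℂ) = 0)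
    (hb : (inner ℂ b η : ℂ) = 0) {ψ : H} (hψ : ψ ∈ Hx y) :
    (inner ℂ (U ψ) η : ℂ) = 0 := by
  have hle : Submodule.span ℂ {a} ⊔ Hx y ⊔ Submodule.span ℂ {b} ≤ (ℂ ∙ η)ᗮ := by
    simp only [sup_le_iff, Submodule.span_singleton_le_iff_mem,
      Submodule.mem_orthogonal_singleton_iff_inner_left]
    exact ⟨⟨ha, fun v hv => Submodule.mem_orthogonal_singleton_iff_inner_left.mpr (hy v hv)⟩, hb⟩
  exact Submodule.mem_orthogonal_singleton_iff_inner_left.mp (hle (hrange ψ hψ))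

lemma symm_apply_mem_Hx (U : H ≃ₗᵢ[ℂ] H) {x : ℤ} {η : H}
    (h : ∀ y ≠ x, ∀ i : Fin 2, (inner ℂ (U (e y i)) η : ℂ) = 0) : U.symm η ∈ Hx x :=
  mem_Hx_of_inner_e_eq_zero fun y hy i => by
    rw [← U.inner_map_map, U.apply_symm_apply, h y hy i]

lemma exists_unit_preimage_of_rank_eq_zero {U : H ≃ₗᵢ[ℂ] H} {x z : ℤ}
    (hr : LinearMap.rank (((P x).comp ((clm U).comp (P z))).toLinearMap) = 0)
    {η : H} (hη : η ∈ Hx x) (hη_norm : ‖η‖ = 1)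
    (hother : ∀ y, y ≠ x → y ≠ z → ∀ i : Fin 2, (inner ℂ (U (e y i)) η : ℂ) = 0) :
    ∃ ζ ∈ Hx x, ‖ζ‖ = 1 ∧ U ζ = η := by
  refine ⟨U.symm η, symm_apply_mem_Hx U fun y hy i => ?_, by simpa using hη_norm, by simp⟩
  by_cases hyz : y = z
  · exact hyz ▸ inner_apply_e_eq_zero_of_rank_eq_zero hr i hη
  · exact hother y hy hyz i

theorem rank_zero_case_general (U : H ≃ₗᵢ[ℂ] H) (η₁ η₂ : ℤ → H)
    (hη : ∀ x : ℤ, ONBx x (η₁ x) (η₂ x))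
    (hrange : ∀ x : ℤ, ∀ ψ ∈ Hx x,
      U ψ ∈ Submodule.span ℂ {η₁ (x - 1)} ⊔ Hx x ⊔ Submodule.span ℂ {η₂ (x + 1)})
    (x : ℤ) :
    (LinearMap.rank (((P x).comp ((clm U).comp (P (x + 1)))).toLinearMap) = 0 →
      ∃ ζ₁ ∈ Hx x, ‖ζ₁‖ = 1 ∧ U ζ₁ = η₁ x) ∧
    (LinearMap.rank (((P x).comp ((clm U).comp (P (x - 1)))).toLinearMap) = 0 →
      ∃ ζ₂ ∈ Hx x, ‖ζ₂‖ = 1 ∧ U ζ₂ = η₂ x) := by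
  obtain ⟨h₁, h₂, hn₁, hn₂, h₁₂⟩ := hη x
  have h₂₁ : (inner ℂ (η₂ x) (η₁ x) : ℂ) = 0 := inner_eq_zero_symm.mp h₁₂
  refine ⟨fun hr => exists_unit_preimage_of_rank_eq_zero hr h₁ hn₁ fun y hy hy' i => ?_,
    fun hr => exists_unit_preimage_of_rank_eq_zero hr h₂ hn₂ fun y hy hy' i => ?_⟩
  · refine inner_apply_eq_zero_of_orthogonal (hrange y)
      (inner_eq_zero_of_mem_Hx (by omega) (hη _).1 h₁)
      (fun v hv => inner_eq_zero_of_mem_Hx hy hv h₁) ?_ (e_mem_Hx y i)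
    by_cases hyx : y + 1 = x
    · rwa [hyx]
    · exact inner_eq_zero_of_mem_Hx hyx (hη _).2.1 h₁
  · refine inner_apply_eq_zero_of_orthogonal (hrange y) ?_
      (fun v hv => inner_eq_zero_of_mem_Hx hy hv h₂)
      (inner_eq_zero_of_mem_Hx (by omega) (hη _).2.1 h₂) (e_mem_Hx y i)
    by_cases hyx : y - 1 = x
    · rwa [hyx]
    · exact inner_eq_zero_of_mem_Hx hyx (hη _).1 h₂

/-- If `rank(P_x U P_{x+1}) = 0` then some unit vector
`ζ₁ ∈ H_x` satisfies `U ζ₁ = η₁ˣ`; if `rank(P_x U P_{x−1}) = 0` then some unit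
vector `ζ₂ ∈ H_x` satisfies `U ζ₂ = η₂ˣ`. -/
theorem rank_zero_case (U : H ≃ₗᵢ[ℂ] H) (hU : SSQW U) (η₁ η₂ : ℤ → H)
    (hη : ∀ x : ℤ, ONBx x (η₁ x) (η₂ x))
    (hrange : ∀ x : ℤ, ∀ ψ ∈ Hx x,
      U ψ ∈ Submodule.span ℂ {η₁ (x - 1)} ⊔ Hx x ⊔ Submodule.span ℂ {η₂ (x + 1)})
    (x : ℤ) :
    (LinearMap.rank (((P x).comp ((clm U).comp (P (x + 1)))).toLinearMap) = 0 →
      ∃ ζ₁ ∈ Hx x, ‖ζ₁‖ = 1 ∧ U ζ₁ = η₁ x) ∧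
    (LinearMap.rank (((P x).comp ((clm U).comp (P (x - 1)))).toLinearMap) = 0 →
      ∃ ζ₂ ∈ Hx x, ‖ζ₂‖ = 1 ∧ U ζ₂ = η₂ x) :=
  rank_zero_case_general U η₁ η₂ hη hrange x
end
end
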